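/- Let U ⊆ ℝ⁴ be open, and let 𝒜 ⊆ U × (ℝ⁴ ∖ {0}) be an open, connected set that is conic in the fiber variable (if (x,ẋ) ∈ 𝒜 and λ > 0 then (x,λẋ) ∈ 𝒜). Let Γ^c_{ab} : U → ℝ (a,b,c ∈ {0,1,2,3}) be smooth with Γ^c_{ab} = Γ^c_{ba}, and set δ_a := ∂/∂x^a − Σ_{b,c} Γ^c_{ab} ẋ^b ∂/∂ẋ^c, acting on smooth functions on 𝒜. Suppose L, L̃ : 𝒜 → ℝ are smooth, positively 2-homogeneous in ẋ (L(x,λẋ) = λ²L(x,ẋ) and L̃(x,λẋ) = λ²L̃(x,ẋ) for all λ > 0), satisfy δ_a L = 0 and δ_a L̃ = 0 for all a, that L̃ vanishes nowhere on 𝒜, and that the fiber gradients are pointwise proportional: for every (x,ẋ) ∈ 𝒜 there is f(x,ẋ) ∈ ℝ with ∂L/∂ẋ^a = f(x,ẋ)·∂L̃/∂ẋ^a for all a. Then there is a constant c ∈ ℝ with L = c·L̃ on 𝒜. -/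

import Mathlib

lemma aux_vert_decomp (w : Fin 4 → ℝ) :
    ((0, w) : (Fin 4 → ℝ) × (Fin 4 → ℝ)) =
      ∑ a : Fin 4, w a • ((0 : Fin 4 → ℝ), (Pi.single a 1 : Fin 4 → ℝ)) := by
  refine Prod.ext ?_ ?_
  · simp [Prod.fst_sum]
  · simp only [Prod.snd_sum, Prod.smul_mk]
    funext i
    simp [Finset.sum_apply, Pi.single_apply]

lemma aux_vert (D : ((Fin 4 → ℝ) × (Fin 4 → ℝ)) →L[ℝ] ℝ) (w : Fin 4 → ℝ) :
    D (0, w) = ∑ a : Fin 4, w a * D (0, Pi.single a 1) := by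
  rw [aux_vert_decomp w, map_sum]
  refine Finset.sum_congr rfl fun a _ => ?_
  rw [map_smul, smul_eq_mul]

lemma aux_decomp (u w : Fin 4 → ℝ) (h : Fin 4 → Fin 4 → ℝ) :
    ((u, w) : (Fin 4 → ℝ) × (Fin 4 → ℝ)) =
      (∑ a : Fin 4, u a • (((Pi.single a 1 : Fin 4 → ℝ)), h a)) +
        ((0 : Fin 4 → ℝ), w - ∑ a : Fin 4, u a • h a) := by
  refine Prod.ext ?_ ?_
  · simp only [Prod.fst_sum, Prod.fst_add, Prod.smul_mk, add_zero]
    funext i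
    simp [Finset.sum_apply, Pi.single_apply]
  · simp only [Prod.snd_sum, Prod.snd_add, Prod.smul_mk]
    abel

lemma aux_euler {A : Set ((Fin 4 → ℝ) × (Fin 4 → ℝ))} (hAopen : IsOpen A)
    {M : (Fin 4 → ℝ) × (Fin 4 → ℝ) → ℝ}
    (hM : ContDiffOn ℝ (⊤ : ℕ∞) M A)
    (hhom : ∀ x v, (x, v) ∈ A → ∀ lam : ℝ, 0 < lam → M (x, lam • v) = lam ^ 2 * M (x, v))
    {p : (Fin 4 → ℝ) × (Fin 4 → ℝ)} (hp : p ∈ A) :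
    fderiv ℝ M p ((0 : Fin 4 → ℝ), p.2) = 2 * M p := by
  have hdiff : DifferentiableAt ℝ M p :=
    (hM.differentiableOn (by simp)).differentiableAt (hAopen.mem_nhds hp)
  have hcurve : HasDerivAt (fun t : ℝ => ((p.1, t • p.2) : (Fin 4 → ℝ) × (Fin 4 → ℝ)))
      (((0 : Fin 4 → ℝ), p.2)) 1 := by
    have h1 : HasDerivAt (fun _ : ℝ => p.1) 0 1 := hasDerivAt_const 1 p.1
    have h2 : HasDerivAt (fun t : ℝ => t • p.2) ((1 : ℝ) • p.2) 1 :=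
      (hasDerivAt_id (1 : ℝ)).smul_const p.2
    rw [one_smul] at h2
    exact h1.prodMk h2
  have hcomp : HasDerivAt (fun t : ℝ => M (p.1, t • p.2))
      (fderiv ℝ M p ((0 : Fin 4 → ℝ), p.2)) 1 := by
    have hpeq : p = (p.1, (1:ℝ) • p.2) := by simp
    have hF : HasFDerivAt M (fderiv ℝ M p) (p.1, (1:ℝ) • p.2) := hpeq ▸ hdiff.hasFDerivAt
    exact hF.comp_hasDerivAt 1 hcurve
  have heq : (fun t : ℝ => t ^ 2 * M p) =ᶠ[nhds (1 : ℝ)] fun t : ℝ => M (p.1, t • p.2) := by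
    filter_upwards [Ioi_mem_nhds (by norm_num : (0 : ℝ) < 1)] with t ht
    rw [hhom p.1 p.2 (by simpa using hp) t ht]
  have h1 : HasDerivAt (fun t : ℝ => t ^ 2 * M p)
      (fderiv ℝ M p ((0 : Fin 4 → ℝ), p.2)) 1 := hcomp.congr_of_eventuallyEq heq
  have h2 : HasDerivAt (fun t : ℝ => t ^ 2 * M p) (2 * M p) 1 := by
    simpa using (hasDerivAt_pow 2 (1 : ℝ)).mul_const (M p)
  exact h1.unique h2

/-- core of Lemma 1 of the paper. Two smooth, positively 2-homogeneous
solutions `L, L̃` of the metrization system `δ_a L = 0` on an open connected conic set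
`𝒜 ⊆ U × (ℝ⁴ ∖ {0})`, with `L̃` nowhere zero and pointwise proportional fiber gradients,
coincide up to a constant factor. -/
theorem statement_8
    (U : Set (Fin 4 → ℝ)) (hU : IsOpen U)
    (A : Set ((Fin 4 → ℝ) × (Fin 4 → ℝ)))
    (hAopen : IsOpen A) (hAconn : IsConnected A)
    (hAsub : A ⊆ U ×ˢ {v : Fin 4 → ℝ | v ≠ 0})
    (hAconic : ∀ x v, (x, v) ∈ A → ∀ lam : ℝ, 0 < lam → (x, lam • v) ∈ A)
    (Γ : Fin 4 → Fin 4 → Fin 4 → (Fin 4 → ℝ) → ℝ)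
    (hΓsmooth : ∀ c a b, ContDiffOn ℝ (⊤ : ℕ∞) (Γ c a b) U)
    (hΓsym : ∀ c a b x, Γ c a b x = Γ c b a x)
    (L L' : (Fin 4 → ℝ) × (Fin 4 → ℝ) → ℝ)
    (hL : ContDiffOn ℝ (⊤ : ℕ∞) L A) (hL' : ContDiffOn ℝ (⊤ : ℕ∞) L' A)
    (hLhom : ∀ x v, (x, v) ∈ A → ∀ lam : ℝ, 0 < lam → L (x, lam • v) = lam ^ 2 * L (x, v))
    (hL'hom : ∀ x v, (x, v) ∈ A → ∀ lam : ℝ, 0 < lam → L' (x, lam • v) = lam ^ 2 * L' (x, v))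
    (hLδ : ∀ p ∈ A, ∀ a : Fin 4,
      fderiv ℝ L p
        ((Pi.single a 1 : Fin 4 → ℝ), fun c => -∑ b : Fin 4, Γ c a b p.1 * p.2 b) = 0)
    (hL'δ : ∀ p ∈ A, ∀ a : Fin 4,
      fderiv ℝ L' p
        ((Pi.single a 1 : Fin 4 → ℝ), fun c => -∑ b : Fin 4, Γ c a b p.1 * p.2 b) = 0)
    (hL'ne : ∀ p ∈ A, L' p ≠ 0)
    (hprop : ∀ p ∈ A, ∃ f : ℝ, ∀ a : Fin 4,
      fderiv ℝ L p ((0 : Fin 4 → ℝ), (Pi.single a 1 : Fin 4 → ℝ)) =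
        f * fderiv ℝ L' p ((0 : Fin 4 → ℝ), (Pi.single a 1 : Fin 4 → ℝ))) :
    ∃ cst : ℝ, ∀ p ∈ A, L p = cst * L' p := by
  -- differentiability
  have hdL : ∀ p ∈ A, DifferentiableAt ℝ L p := fun p hp =>
    (hL.differentiableOn (by simp)).differentiableAt (hAopen.mem_nhds hp)
  have hdL' : ∀ p ∈ A, DifferentiableAt ℝ L' p := fun p hp =>
    (hL'.differentiableOn (by simp)).differentiableAt (hAopen.mem_nhds hp)
  -- the full derivative of L is pointwise proportional to that of L', with factor L/L'
  have key : ∀ p ∈ A, ∀ z : (Fin 4 → ℝ) × (Fin 4 → ℝ),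
      fderiv ℝ L p z = (L p / L' p) * fderiv ℝ L' p z := by
    intro p hp z
    obtain ⟨f, hf⟩ := hprop p hp
    -- Euler: f = L p / L' p
    have eL : fderiv ℝ L p ((0 : Fin 4 → ℝ), p.2) = 2 * L p := aux_euler hAopen hL hLhom hp
    have eL' : fderiv ℝ L' p ((0 : Fin 4 → ℝ), p.2) = 2 * L' p := aux_euler hAopen hL' hL'hom hp
    have hvert : ∀ w : Fin 4 → ℝ, fderiv ℝ L p ((0 : Fin 4 → ℝ), w) =
        f * fderiv ℝ L' p ((0 : Fin 4 → ℝ), w) := by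
      intro w
      rw [aux_vert (fderiv ℝ L p) w, aux_vert (fderiv ℝ L' p) w, Finset.mul_sum]
      refine Finset.sum_congr rfl fun a _ => ?_
      rw [hf a]; ring
    have hLf : L p = f * L' p := by
      have := hvert p.2
      rw [eL, eL'] at this
      linarith
    have hfval : L p / L' p = f := by
      rw [hLf]; field_simp [hL'ne p hp]
    rw [hfval]
    -- decompose z = (u, w)
    obtain ⟨u, w⟩ := z
    set h : Fin 4 → Fin 4 → ℝ := fun a c => -∑ b : Fin 4, Γ c a b p.1 * p.2 b with hh
    have hdec := aux_decomp u w h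
    rw [hdec, map_add, map_add, map_sum, map_sum]
    have hz1 : ∀ a : Fin 4,
        fderiv ℝ L p (u a • (((Pi.single a 1 : Fin 4 → ℝ)), h a)) = 0 := by
      intro a
      rw [map_smul, smul_eq_mul]
      have := hLδ p hp a
      rw [show (fun c => -∑ b : Fin 4, Γ c a b p.1 * p.2 b) = h a from rfl] at this
      rw [this]; ring
    have hz1' : ∀ a : Fin 4,
        fderiv ℝ L' p (u a • (((Pi.single a 1 : Fin 4 → ℝ)), h a)) = 0 := by
      intro a
      rw [map_smul, smul_eq_mul]
      have := hL'δ p hp a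
      rw [show (fun c => -∑ b : Fin 4, Γ c a b p.1 * p.2 b) = h a from rfl] at this
      rw [this]; ring
    rw [Finset.sum_congr rfl fun a _ => hz1 a, Finset.sum_congr rfl fun a _ => hz1' a]
    simp only [Finset.sum_const_zero, zero_add]
    exact hvert _
  -- q := L / L' has zero derivative on A
  set q : (Fin 4 → ℝ) × (Fin 4 → ℝ) → ℝ := fun p => L p / L' p with hq
  have hq0 : ∀ p ∈ A, HasFDerivAt q (0 : ((Fin 4 → ℝ) × (Fin 4 → ℝ)) →L[ℝ] ℝ) p := by
    intro p hp
    have hinv : HasFDerivAt (fun y => (L' y)⁻¹)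
        ((-(L' p ^ 2)⁻¹) • fderiv ℝ L' p) p :=
      (hasDerivAt_inv (hL'ne p hp)).comp_hasFDerivAt p (hdL' p hp).hasFDerivAt
    have hmul := ((hdL p hp).hasFDerivAt).mul hinv
    have hzero : (L p • ((-(L' p ^ 2)⁻¹) • fderiv ℝ L' p) + (L' p)⁻¹ • fderiv ℝ L p)
        = (0 : ((Fin 4 → ℝ) × (Fin 4 → ℝ)) →L[ℝ] ℝ) := by
      refine ContinuousLinearMap.ext fun z => ?_
      simp only [ContinuousLinearMap.add_apply, ContinuousLinearMap.coe_smul',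
        Pi.smul_apply, ContinuousLinearMap.zero_apply, smul_eq_mul, neg_smul, neg_mul,
        ContinuousLinearMap.neg_apply]
      rw [key p hp z]
      simp only [Pi.neg_apply, Pi.smul_apply, smul_eq_mul]
      field_simp
      ring
    have : HasFDerivAt (fun y => L y * (L' y)⁻¹) 0 p := hzero ▸ hmul
    refine this.congr_of_eventuallyEq ?_
    filter_upwards [hAopen.mem_nhds hp] with y _
    exact div_eq_mul_inv (L y) (L' y)
  -- q is locally constant on A
  obtain ⟨p₀, hp₀⟩ := hAconn.nonempty
  refine ⟨q p₀, fun p hp => ?_⟩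
  have : PreconnectedSpace A := Subtype.preconnectedSpace hAconn.isPreconnected
  have hlc : IsLocallyConstant (fun x : A => q x) := by
    rw [IsLocallyConstant.iff_exists_open]
    rintro ⟨x, hx⟩
    obtain ⟨ε, hε, hball⟩ := Metric.isOpen_iff.1 hAopen x hx
    refine ⟨Subtype.val ⁻¹' Metric.ball x ε, continuous_subtype_val.isOpen_preimage _
      Metric.isOpen_ball, by exact Metric.mem_ball_self hε, ?_⟩
    rintro ⟨y, hy⟩ hyb
    have hconst := (convex_ball x ε).is_const_of_fderivWithin_eq_zero
      (f := q) (fun z hz => ((hq0 z (hball hz)).differentiableAt).differentiableWithinAt)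
      (fun z hz => by rw [fderivWithin_of_isOpen Metric.isOpen_ball hz, (hq0 z (hball hz)).fderiv])
      hyb (Metric.mem_ball_self hε)
    simpa using hconst
  have := hlc.apply_eq_of_preconnectedSpace ⟨p, hp⟩ ⟨p₀, hp₀⟩
  have hqp : q p = q p₀ := this
  have : L p = q p * L' p := by
    rw [hq]; field_simp [hL'ne p hp]
  rw [this, hqp]
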